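/- For all 0 < p < 1, the function ψ(p,q) = h̃(pq) + 4pq(h(p) + h(q) − h(pq)) satisfies ψ(p, 1/2) = 2h(p), where h is the binary entropy function and h̃(p) = h(4p(1−p)). -/
import Mathlib


noncomputable section

/-- The binary entropy function h(p) = −p log₂ p − (1−p) log₂(1−p). -/
def binEnt (p : ℝ) : ℝ := -p * Real.logb 2 p - (1 - p) * Real.logb 2 (1 - p)

/-- h̃(p) = h(4p(1−p)). -/
def binEntT (p : ℝ) : ℝ := binEnt (4 * p * (1 - p))

/-- ψ(p,q) = h̃(pq) + 4pq(h(p) + h(q) − h(pq)). -/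
def psi (p q : ℝ) : ℝ := binEntT (p * q) + 4 * p * q * (binEnt p + binEnt q - binEnt (p * q))

theorem psi_half (p : ℝ) (h0 : 0 < p) (h1 : p < 1) : psi p (1 / 2) = 2 * binEnt p := by
  have h1p : (0:ℝ) < 1 - p := by linarith
  have h2p : (0:ℝ) < 2 - p := by linarith
  have hl2 : Real.log 2 ≠ 0 := ne_of_gt (Real.log_pos (by norm_num))
  have hhalf : Real.log (1/2 : ℝ) = -Real.log 2 := by
    rw [one_div, Real.log_inv]
  simp only [psi, binEntT, binEnt, Real.logb]
  rw [show 4 * (p * (1/2)) * (1 - p * (1/2)) = p * (2 - p) by ring]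
  rw [show (1:ℝ) - p * (2 - p) = (1 - p)^2 by ring]
  rw [show p * (1/2) = p / 2 by ring]
  rw [show (1:ℝ) - p / 2 = (2 - p)/2 by ring]
  rw [show (1:ℝ) - 1/2 = 1/2 by norm_num]
  rw [Real.log_mul (ne_of_gt h0) (ne_of_gt h2p), Real.log_pow,
    Real.log_div (ne_of_gt h0) two_ne_zero, Real.log_div (ne_of_gt h2p) two_ne_zero]
  simp only [hhalf]
  field_simp
  ring
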